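/- Let C be a full commutative C*-category. The Gelfand transform G_C : C → Γ(Σ(C)), sending x ∈ C_{BA} to the section [ω] ↦ x + I_ω (the class of x in the fiber C_{BA}/(I_ω ∩ C_{BA})), is a faithful *-functor that is isometric on every Hom space: ‖G_C(x)‖ = ‖x‖. -/

import Mathlib

/-!
For `x : Hom A B` the element `x* x` of the commutative C*-algebra `Hom B B` is self-adjoint, so its
norm `‖x‖²` is its spectral radius, attained as `|φ (x* x)|` at a character `φ` of `Hom B B`.
This `φ` extends to a ℂ-valued *-functor: `⟨y, z⟩ = φ (y* z)` is a semi-inner product on each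
`Hom A B`; by Cauchy–Schwarz and fullness it has a unit vector `e_A`, by commutativity of the
diagonal algebras it has rank one (`⟨w, v⟩ = ⟨w, e⟩ ⟨e, v⟩`), and so `f ↦ ⟨e_A, f e_B⟩` is
multiplicative. Its value at `x` has modulus `‖x‖`, while every *-functor `χ` satisfies
`|χ x| ≤ ‖x + I_χ‖ ≤ ‖x‖`.
-/

open ComplexConjugate

/-- A C*-category: Hom spaces are complex Banach spaces, composition is bilinear and
submultiplicative, and there is an antilinear involutive contravariant *-operation fixing
objects, satisfying the C*-identity and positivity. -/
class CStarCat (O : Type*) (Hom : O → O → Type*)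
    [∀ A B, NormedAddCommGroup (Hom A B)] [∀ A B, NormedSpace ℂ (Hom A B)] where
  complete : ∀ A B, CompleteSpace (Hom A B)
  comp : ∀ {A B C : O}, Hom A B → Hom B C → Hom A C
  ide : ∀ A : O, Hom A A
  comp_assoc : ∀ {A B C D : O} (x : Hom A B) (y : Hom B C) (z : Hom C D),
      comp (comp x y) z = comp x (comp y z)
  ide_comp : ∀ {A B : O} (x : Hom A B), comp (ide A) x = x
  comp_ide : ∀ {A B : O} (x : Hom A B), comp x (ide B) = x
  comp_add_left : ∀ {A B C : O} (x y : Hom A B) (z : Hom B C),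
      comp (x + y) z = comp x z + comp y z
  comp_add_right : ∀ {A B C : O} (x : Hom A B) (y z : Hom B C),
      comp x (y + z) = comp x y + comp x z
  comp_smul_left : ∀ {A B C : O} (c : ℂ) (x : Hom A B) (z : Hom B C),
      comp (c • x) z = c • comp x z
  comp_smul_right : ∀ {A B C : O} (c : ℂ) (x : Hom A B) (z : Hom B C),
      comp x (c • z) = c • comp x z
  norm_comp_le : ∀ {A B C : O} (x : Hom A B) (y : Hom B C), ‖comp x y‖ ≤ ‖x‖ * ‖y‖
  invol : ∀ {A B : O}, Hom A B → Hom B A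
  invol_invol : ∀ {A B : O} (x : Hom A B), invol (invol x) = x
  invol_add : ∀ {A B : O} (x y : Hom A B), invol (x + y) = invol x + invol y
  invol_smul : ∀ {A B : O} (c : ℂ) (x : Hom A B), invol (c • x) = (conj c) • invol x
  invol_comp : ∀ {A B C : O} (x : Hom A B) (y : Hom B C),
      invol (comp x y) = comp (invol y) (invol x)
  norm_invol_comp : ∀ {A B : O} (x : Hom A B), ‖comp (invol x) x‖ = ‖x‖ ^ 2
  pos : ∀ {A B : O} (x : Hom A B), ∃ y : Hom B B, comp (invol x) x = comp (invol y) y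

/-- A ℂ-valued *-functor on a C*-category (ℂ viewed as a one-object C*-category). -/
structure CChar (O : Type*) (Hom : O → O → Type*)
    [∀ A B, NormedAddCommGroup (Hom A B)] [∀ A B, NormedSpace ℂ (Hom A B)]
    [CStarCat O Hom] where
  ω : ∀ {A B : O}, Hom A B → ℂ
  map_add : ∀ {A B : O} (x y : Hom A B), ω (x + y) = ω x + ω y
  map_smul : ∀ {A B : O} (c : ℂ) (x : Hom A B), ω (c • x) = c * ω x
  map_comp : ∀ {A B C : O} (x : Hom A B) (y : Hom B C),
      ω (CStarCat.comp x y) = ω x * ω y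
  map_ide : ∀ A : O, ω (CStarCat.ide A) = 1
  map_invol : ∀ {A B : O} (x : Hom A B), ω (CStarCat.invol x) = conj (ω x)

/-- Unitary equivalence of ℂ-valued *-functors, by a unitary natural transformation. -/
def UnitEquiv {O : Type*} {Hom : O → O → Type*}
    [∀ A B, NormedAddCommGroup (Hom A B)] [∀ A B, NormedSpace ℂ (Hom A B)]
    [CStarCat O Hom] (ω ω' : CChar O Hom) : Prop :=
  ∃ ν : O → ℂ, (∀ A, ‖ν A‖ = 1) ∧
    ∀ {A B : O} (x : Hom A B), ω'.ω x * ν B = ν A * ω.ω x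

/-- A C*-category is commutative if every diagonal block is a commutative C*-algebra. -/
def IsCommutative (O : Type*) (Hom : O → O → Type*)
    [∀ A B, NormedAddCommGroup (Hom A B)] [∀ A B, NormedSpace ℂ (Hom A B)]
    [CStarCat O Hom] : Prop :=
  ∀ (A : O) (x y : Hom A A), CStarCat.comp x y = CStarCat.comp y x

/-- A C*-category is full if for all objects A, B the span of the products
C_{AB} ∘ C_{BA} is dense in C_{AA} (imprimitivity of the off-diagonal bimodules). -/
def IsFull (O : Type*) (Hom : O → O → Type*)
    [∀ A B, NormedAddCommGroup (Hom A B)] [∀ A B, NormedSpace ℂ (Hom A B)]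
    [CStarCat O Hom] : Prop :=
  ∀ A B : O,
    closure ((Submodule.span ℂ
      {z : Hom A A | ∃ (x : Hom A B) (y : Hom B A), z = CStarCat.comp x y} :
        Submodule ℂ (Hom A A)) : Set (Hom A A)) = Set.univ

variable {O : Type*} {Hom : O → O → Type*}
  [∀ A B, NormedAddCommGroup (Hom A B)] [∀ A B, NormedSpace ℂ (Hom A B)]
  [CStarCat O Hom]

/-- The kernel ideal I_ω of a ℂ-valued *-functor ω, intersected with the Hom space
C_{AB}, as a submodule; the fiber of the spectral spaceoid over ([ω],(A,B)) is the
quotient by this submodule. -/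
def kerIdeal (ω : CChar O Hom) (A B : O) : Submodule ℂ (Hom A B) where
  carrier := {x | ω.ω x = 0}
  add_mem' := by
    intro a b ha hb
    simp only [Set.mem_setOf_eq] at *
    rw [ω.map_add, ha, hb, add_zero]
  zero_mem' := by
    have h := ω.map_smul (A := A) (B := B) 0 0
    simpa using h
  smul_mem' := by
    intro c x hx
    simp only [Set.mem_setOf_eq] at *
    rw [ω.map_smul, hx, mul_zero]

open CStarCat WeakDual
open scoped ComplexOrder

namespace CStarCat

theorem zero_comp {A B C : O} (z : Hom B C) : comp (0 : Hom A B) z = 0 :=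
  add_eq_right.mp (by rw [← CStarCat.comp_add_left, add_zero])

theorem comp_zero {A B C : O} (x : Hom A B) : comp x (0 : Hom B C) = 0 :=
  add_eq_right.mp (by rw [← CStarCat.comp_add_right, add_zero])

end CStarCat

variable (Hom) in
/-- A type synonym for `Hom A A`, on which composition becomes the multiplication of a
C*-algebra. -/
def Diag (A : O) : Type _ := Hom A A

namespace Diag

variable (A : O)

instance instNormedAddCommGroup : NormedAddCommGroup (Diag Hom A) :=
  inferInstanceAs (NormedAddCommGroup (Hom A A))

instance instNormedSpace : NormedSpace ℂ (Diag Hom A) :=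
  inferInstanceAs (NormedSpace ℂ (Hom A A))

instance instCompleteSpace : CompleteSpace (Diag Hom A) :=
  CStarCat.complete (Hom := Hom) A A

instance instRing : Ring (Diag Hom A) :=
  { instNormedAddCommGroup A with
    mul := comp (Hom := Hom)
    one := ide A
    mul_assoc := comp_assoc (Hom := Hom)
    one_mul := ide_comp (Hom := Hom)
    mul_one := comp_ide (Hom := Hom)
    left_distrib := CStarCat.comp_add_right (Hom := Hom)
    right_distrib := CStarCat.comp_add_left (Hom := Hom)
    zero_mul := zero_comp (Hom := Hom)
    mul_zero := comp_zero (Hom := Hom) }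

noncomputable instance instAlgebra : Algebra ℂ (Diag Hom A) :=
  Algebra.ofModule (CStarCat.comp_smul_left (Hom := Hom))
    (CStarCat.comp_smul_right (Hom := Hom))

instance instStarRing : StarRing (Diag Hom A) where
  star := invol (Hom := Hom)
  star_involutive := invol_invol (Hom := Hom)
  star_mul := invol_comp (Hom := Hom)
  star_add := invol_add (Hom := Hom)

instance instStarModule : StarModule ℂ (Diag Hom A) where
  star_smul := invol_smul (Hom := Hom)

noncomputable instance instNormedRing : NormedRing (Diag Hom A) :=
  { instNormedAddCommGroup A, instRing A with
    dist_eq := fun x y => by rw [neg_add_eq_sub, dist_comm, dist_eq_norm]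
    norm_mul_le := norm_comp_le (Hom := Hom) }

noncomputable instance instNormedAlgebra : NormedAlgebra ℂ (Diag Hom A) :=
  { instAlgebra A with norm_smul_le := norm_smul_le }

instance instCStarRing : CStarRing (Diag Hom A) where
  norm_mul_self_le x := (norm_invol_comp (Hom := Hom) x).symm ▸ (sq ‖x‖).ge

noncomputable instance instCStarAlgebra : CStarAlgebra (Diag Hom A) :=
  { instNormedRing A, instStarRing A, instCStarRing A, instNormedAlgebra A,
    instStarModule A, instCompleteSpace A with }

def of {A : O} (x : Hom A A) : Diag Hom A := x

variable {A}

@[simp]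
theorem of_comp (x y : Hom A A) : of (comp x y) = of x * of y := rfl

@[simp]
theorem of_invol (x : Hom A A) : of (invol x) = star (of x) := rfl

noncomputable abbrev commCStarAlgebra (A : O) (hc : IsCommutative O Hom) :
    CommCStarAlgebra (Diag Hom A) :=
  { instCStarAlgebra A with mul_comm := hc A }

end Diag

namespace CChar

variable (χ : CChar O Hom)

def toLinearMap (A B : O) : Hom A B →ₗ[ℂ] ℂ where
  toFun := χ.ω
  map_add' := χ.map_add
  map_smul' := χ.map_smul

noncomputable def toAlgHom (A : O) : Diag Hom A →ₐ[ℂ] ℂ :=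
  AlgHom.ofLinearMap (χ.toLinearMap A A) (χ.map_ide A) χ.map_comp

theorem ide_ne_zero (χ : CChar O Hom) (A : O) : (ide A : Hom A A) ≠ 0 := fun h => by
  have h1 : χ.toLinearMap A A (ide A) = 1 := χ.map_ide A
  rw [h, map_zero] at h1
  exact zero_ne_one h1

theorem norm_apply_sq {A B : O} (x : Hom A B) :
    ‖χ.ω x‖ ^ 2 = ‖χ.ω (comp (invol x) x)‖ := by
  rw [χ.map_comp, χ.map_invol, norm_mul, RCLike.norm_conj, sq]

theorem norm_apply_le {A B : O} (x : Hom A B) : ‖χ.ω x‖ ≤ ‖x‖ := by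
  have : Nontrivial (Diag Hom B) := ⟨⟨ide B, 0, χ.ide_ne_zero B⟩⟩
  have h := AlgHom.norm_apply_le_self (A := Diag Hom B) (χ.toAlgHom B) (comp (invol x) x)
  rw [← pow_le_pow_iff_left₀ (norm_nonneg _) (norm_nonneg _) two_ne_zero, norm_apply_sq,
    ← norm_invol_comp]
  exact h

theorem norm_apply_le_norm_mk {A B : O} (x : Hom A B) :
    ‖χ.ω x‖ ≤ ‖(Submodule.Quotient.mk x : Hom A B ⧸ kerIdeal χ A B)‖ := by
  refine QuotientAddGroup.le_norm_iff.mpr fun m hm => ?_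
  have hmx : χ.toLinearMap A B (m - x) = 0 := (Submodule.Quotient.eq _).mp hm
  rw [map_sub, sub_eq_zero] at hmx
  calc ‖χ.ω x‖ = ‖χ.ω m‖ := congrArg norm hmx.symm
    _ ≤ ‖m‖ := χ.norm_apply_le m

end CChar

section CharInner

variable {Z : O} (φ : characterSpace ℂ (Diag Hom Z))

noncomputable def charInner {A : O} (y z : Hom A Z) : ℂ :=
  φ (Diag.of (comp (invol y) z))

theorem charInner_add_left {A : O} (y y' z : Hom A Z) :
    charInner φ (y + y') z = charInner φ y z + charInner φ y' z := by
  rw [charInner, invol_add, CStarCat.comp_add_left]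
  exact map_add φ _ _

theorem charInner_add_right {A : O} (y z z' : Hom A Z) :
    charInner φ y (z + z') = charInner φ y z + charInner φ y z' := by
  rw [charInner, CStarCat.comp_add_right]
  exact map_add φ _ _

theorem charInner_smul_left {A : O} (c : ℂ) (y z : Hom A Z) :
    charInner φ (c • y) z = conj c * charInner φ y z := by
  rw [charInner, invol_smul, CStarCat.comp_smul_left]
  exact map_smul φ _ _

theorem charInner_smul_right {A : O} (c : ℂ) (y z : Hom A Z) :
    charInner φ y (c • z) = c * charInner φ y z := by
  rw [charInner, CStarCat.comp_smul_right]
  exact map_smul φ _ _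

theorem conj_charInner {A : O} (y z : Hom A Z) : conj (charInner φ y z) = charInner φ z y := by
  rw [charInner, charInner, ← invol_invol y, ← invol_comp, invol_invol]
  exact (map_star φ _).symm

theorem charInner_comp_right {A B : O} (f : Hom A B) (y : Hom A Z) (z : Hom B Z) :
    charInner φ y (comp f z) = charInner φ (comp (invol f) y) z := by
  rw [charInner, charInner, invol_comp, invol_invol, comp_assoc]

theorem charInner_self_nonneg {A : O} (y : Hom A Z) : 0 ≤ charInner φ y y := by
  obtain ⟨w, hw⟩ := CStarCat.pos y
  rw [charInner, hw, Diag.of_comp, Diag.of_invol, map_mul, map_star]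
  exact star_mul_self_nonneg _

noncomputable abbrev charInnerCore (A : O) : PreInnerProductSpace.Core ℂ (Hom A Z) where
  inner := charInner φ
  conj_inner_symm y z := conj_charInner φ z y
  re_inner_nonneg y := (Complex.nonneg_iff.mp (charInner_self_nonneg φ y)).1
  add_left := charInner_add_left φ
  smul_left y z c := charInner_smul_left φ c y z

theorem charInner_eq_zero_of_charInner_self_eq_zero {A : O} {z : Hom A Z}
    (hz : charInner φ z z = 0) (y : Hom A Z) : charInner φ y z = 0 := by
  have cauchySchwarz : ‖charInner φ y z‖ * ‖charInner φ z y‖ ≤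
      (charInner φ y y).re * (charInner φ z z).re :=
    @InnerProductSpace.Core.inner_mul_inner_self_le ℂ (Hom A Z) _ _ _ (charInnerCore φ A) y z
  rw [hz, Complex.zero_re, mul_zero, ← conj_charInner φ y z, RCLike.norm_conj]
    at cauchySchwarz
  exact norm_eq_zero.mp (mul_self_eq_zero.mp (cauchySchwarz.antisymm (mul_self_nonneg _)))

theorem exists_charInner_self_ne_zero (hf : IsFull O Hom) (A : O) :
    ∃ u : Hom A Z, charInner φ u u ≠ 0 := by
  by_contra! hnull
  let K : Submodule ℂ (Hom Z Z) :=
    LinearMap.ker (CharacterSpace.toCLM φ : Diag Hom Z →ₗ[ℂ] ℂ)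
  have hgen :
      Submodule.span ℂ {d : Hom Z Z | ∃ (x : Hom Z A) (y : Hom A Z), d = comp x y} ≤ K := by
    refine Submodule.span_le.mpr ?_
    rintro _ ⟨x, y, rfl⟩
    have h := charInner_eq_zero_of_charInner_self_eq_zero φ (hnull y) (invol x)
    rwa [charInner, invol_invol] at h
  have hK : IsClosed (K : Set (Hom Z Z)) := (CharacterSpace.toCLM φ).isClosed_ker
  have hide : ide Z ∈ K := hK.closure_subset (closure_mono hgen (hf Z A ▸ Set.mem_univ _))
  exact one_ne_zero ((map_one φ).symm.trans hide)

theorem exists_charInner_self_eq_one (hf : IsFull O Hom) (A : O) :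
    ∃ e : Hom A Z, charInner φ e e = 1 := by
  obtain ⟨u, hu⟩ := exists_charInner_self_ne_zero φ hf A
  obtain ⟨r, hr, hru⟩ :=
    RCLike.pos_iff_exists_ofReal.mp ((charInner_self_nonneg φ u).lt_of_ne' hu)
  refine ⟨((√r : ℝ) : ℂ)⁻¹ • u, ?_⟩
  rw [charInner_smul_left, charInner_smul_right, ← hru, map_inv₀, Complex.conj_ofReal,
    ← mul_assoc, ← mul_inv, ← Complex.ofReal_mul, Real.mul_self_sqrt hr.le]
  exact inv_mul_cancel₀ (Complex.ofReal_ne_zero.mpr hr.ne')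

theorem charInner_eq_mul_of_charInner_self_eq_one {B : O}
    (hcB : ∀ x y : Hom B B, comp x y = comp y x) {e : Hom B Z} (he : charInner φ e e = 1)
    (w v : Hom B Z) : charInner φ w v = charInner φ w e * charInner φ e v := by
  have key : comp (comp (invol w) v) (comp (comp (invol e) e) (comp (invol e) e)) =
      comp (comp (invol w) e) (comp (comp (invol e) v) (comp (invol e) e)) :=
    calc _ = comp (invol w) (comp (comp (comp v (invol e)) (comp e (invol e))) e) := by
          simp only [comp_assoc]
      _ = comp (invol w) (comp (comp (comp e (invol e)) (comp v (invol e))) e) := by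
          rw [hcB]
      _ = _ := by simp only [comp_assoc]
  have h := congrArg (fun d => φ (Diag.of d)) key
  simp only [Diag.of_comp, map_mul] at h
  change charInner φ w v * (charInner φ e e * charInner φ e e) =
    charInner φ w e * (charInner φ e v * charInner φ e e) at h
  simpa only [he, mul_one] using h

noncomputable def unitVec (hf : IsFull O Hom) (A : O) : Hom A Z :=
  (exists_charInner_self_eq_one φ hf A).choose

theorem charInner_unitVec (hf : IsFull O Hom) (A : O) :
    charInner φ (unitVec φ hf A) (unitVec φ hf A) = 1 :=
  (exists_charInner_self_eq_one φ hf A).choose_spec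

end CharInner

namespace CChar

variable {Z : O} (φ : characterSpace ℂ (Diag Hom Z))

noncomputable def ofCharacter (hc : IsCommutative O Hom) (hf : IsFull O Hom) :
    CChar O Hom where
  ω {A B} f := charInner φ (unitVec φ hf A) (comp f (unitVec φ hf B))
  map_add x y := by rw [CStarCat.comp_add_left, charInner_add_right]
  map_smul c x := by rw [CStarCat.comp_smul_left, charInner_smul_right]
  map_comp {A B C} f g := by
    rw [comp_assoc, charInner_comp_right,
      charInner_eq_mul_of_charInner_self_eq_one φ (hc B) (charInner_unitVec φ hf B),
      ← charInner_comp_right]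
  map_ide A := by rw [ide_comp, charInner_unitVec]
  map_invol f := by rw [charInner_comp_right, invol_invol, ← conj_charInner]

theorem ofCharacter_apply (hc : IsCommutative O Hom) (hf : IsFull O Hom) (d : Hom Z Z) :
    (ofCharacter φ hc hf).ω d = φ (Diag.of d) := by
  have he := charInner_unitVec φ hf Z
  simp only [ofCharacter, charInner, Diag.of_comp, Diag.of_invol, map_mul] at he ⊢
  linear_combination φ (Diag.of d) * he

theorem exists_norm_apply_eq_norm (hc : IsCommutative O Hom) (hf : IsFull O Hom) {A B : O}
    {x : Hom A B} (hx : x ≠ 0) : ∃ χ : CChar O Hom, ‖χ.ω x‖ = ‖x‖ := by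
  let _ : CommCStarAlgebra (Diag Hom B) := Diag.commCStarAlgebra B hc
  have hide : (ide B : Hom B B) ≠ 0 := fun h => hx (by rw [← comp_ide x, h, comp_zero])
  have : Nontrivial (Diag Hom B) := ⟨⟨Diag.of (ide B), 0, hide⟩⟩
  set a := Diag.of (comp (invol x) x)
  have ha : IsSelfAdjoint a := by
    rw [IsSelfAdjoint, ← Diag.of_invol, invol_comp, invol_invol]
  obtain ⟨z, hz, hza⟩ := spectrum.exists_nnnorm_eq_spectralRadius a
  obtain ⟨φ, rfl⟩ := CharacterSpace.mem_spectrum_iff_exists.mp hz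
  rw [ha.spectralRadius_eq_nnnorm, ENNReal.coe_inj] at hza
  refine ⟨ofCharacter φ hc hf, ?_⟩
  rw [← pow_left_inj₀ (norm_nonneg _) (norm_nonneg _) two_ne_zero, norm_apply_sq,
    ofCharacter_apply, ← norm_invol_comp]
  exact congrArg NNReal.toReal hza

end CChar

theorem iSup_norm_mk_kerIdeal (hc : IsCommutative O Hom) (hf : IsFull O Hom) {A B : O}
    (x : Hom A B) :
    ⨆ χ : CChar O Hom, ‖(Submodule.Quotient.mk x : Hom A B ⧸ kerIdeal χ A B)‖ = ‖x‖ := by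
  rcases eq_or_ne x 0 with rfl | hx
  · simp
  obtain ⟨χ₀, hχ₀⟩ := CChar.exists_norm_apply_eq_norm hc hf hx
  have hle (χ : CChar O Hom) :
      ‖(Submodule.Quotient.mk x : Hom A B ⧸ kerIdeal χ A B)‖ ≤ ‖x‖ :=
    Submodule.Quotient.norm_mk_le _ x
  have : Nonempty (CChar O Hom) := ⟨χ₀⟩
  refine (ciSup_le hle).antisymm ?_
  calc ‖x‖ = ‖χ₀.ω x‖ := hχ₀.symm
    _ ≤ _ := χ₀.norm_apply_le_norm_mk x
    _ ≤ _ := le_ciSup ⟨‖x‖, Set.forall_mem_range.mpr hle⟩ χ₀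

/-- The Gelfand transform of a full commutative C*-category, sending
x ∈ C_{AB} to the section [ω] ↦ x + I_ω of the spectral spaceoid, is isometric on every
Hom space (the sup of the fiberwise quotient norms equals ‖x‖) and faithful. -/
theorem gelfand_transform_isometric_faithful
    (hc : IsCommutative O Hom) (hf : IsFull O Hom) :
    ∀ (A B : O) (x : Hom A B),
      (⨆ ω : CChar O Hom,
        ‖(Submodule.Quotient.mk x : Hom A B ⧸ kerIdeal ω A B)‖) = ‖x‖ ∧
      ((∀ ω : CChar O Hom,
        (Submodule.Quotient.mk x : Hom A B ⧸ kerIdeal ω A B) = 0) → x = 0) := by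
  intro A B x
  refine ⟨iSup_norm_mk_kerIdeal hc hf x, fun hx => norm_eq_zero.mp ?_⟩
  simp only [← iSup_norm_mk_kerIdeal hc hf x, hx, norm_zero, Real.iSup_const_zero]
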